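/- arXiv:1405.5191 — 2 statements merged into one kernel-verified Lean document; each statement's English description precedes it below -/
import Mathlib

section
/- Let C be a weakly separated collection of k-element subsets of [n] containing a set of the form H∪{a,c}, where |H| = k−2 and a, b, c, d are cyclically ordered elements of [n]\H. Suppose every element of C other than H∪{a,c} is weakly separated from H∪{b,d}. Then C ∪ {H∪{a,b}, H∪{b,c}, H∪{c,d}, H∪{d,a}} is a weakly separated collection. -/
set_option maxHeartbeats 1000000


/-- Four elements of `Fin n` are cyclically ordered: some cyclic rotation of the
sequence is strictly increasing in the usual order. -/
def Cyc4 {n : ℕ} (a b c d : Fin n) : Prop :=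
  (a < b ∧ b < c ∧ c < d) ∨ (b < c ∧ c < d ∧ d < a) ∨
    (c < d ∧ d < a ∧ a < b) ∨ (d < a ∧ a < b ∧ b < c)

/-- `I` and `J` are weakly separated: there are no cyclically ordered
`a, b, c, d` with `a, c ∈ I \ J` and `b, d ∈ J \ I`. -/
def WSep {n : ℕ} (I J : Finset (Fin n)) : Prop :=
  ¬ ∃ a b c d : Fin n, Cyc4 a b c d ∧
    a ∈ I \ J ∧ c ∈ I \ J ∧ b ∈ J \ I ∧ d ∈ J \ I

section Helpers

variable {n : ℕ}

theorem WSep.symm {I J : Finset (Fin n)} (h : WSep I J) : WSep J I := by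
  rintro ⟨p, q, r, s, hcyc, h1, h2, h3, h4⟩
  refine h ⟨q, r, s, p, ?_, h3, h4, h2, h1⟩
  simp only [Cyc4, ne_eq, Fin.ext_iff, Fin.lt_def] at hcyc ⊢
  omega

theorem cyc4_rot {a b c d : Fin n} (h : Cyc4 a b c d) : Cyc4 b c d a := by
  simp only [Cyc4, ne_eq, Fin.ext_iff, Fin.lt_def] at h ⊢
  omega

theorem cyc4_ne {a b c d : Fin n} (h : Cyc4 a b c d) :
    a ≠ b ∧ a ≠ c ∧ a ≠ d ∧ b ≠ c ∧ b ≠ d ∧ c ≠ d := by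
  simp only [Cyc4, ne_eq, Fin.ext_iff, Fin.lt_def] at h ⊢
  omega

theorem cyc4_split_chain {w x y z p : Fin n} (hwx : w < x) (hxy : x < y) (hyz : y < z)
    (h1 : p ≠ w) (h2 : p ≠ x) (h3 : p ≠ y) (h4 : p ≠ z) :
    Cyc4 w p x y ∨ Cyc4 x p y z ∨ Cyc4 y p z w ∨ Cyc4 z p w x := by
  rcases lt_trichotomy p w with hh | hh | hh
  · exact Or.inr (Or.inr (Or.inr (Or.inr (Or.inl ⟨hh, hwx, lt_trans hxy hyz⟩))))
  · exact absurd hh h1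
  · rcases lt_trichotomy p x with hh2 | hh2 | hh2
    · exact Or.inl (Or.inl ⟨hh, hh2, hxy⟩)
    · exact absurd hh2 h2
    · rcases lt_trichotomy p y with hh3 | hh3 | hh3
      · exact Or.inr (Or.inl (Or.inl ⟨hh2, hh3, hyz⟩))
      · exact absurd hh3 h3
      · rcases lt_trichotomy p z with hh4 | hh4 | hh4
        · exact Or.inr (Or.inr (Or.inl (Or.inr (Or.inr (Or.inr
            ⟨lt_trans hwx hxy, hh3, hh4⟩)))))
        · exact absurd hh4 h4
        · exact Or.inr (Or.inr (Or.inr (Or.inr (Or.inr (Or.inl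
            ⟨hwx, lt_trans hxy hyz, hh4⟩)))))

/-- Partition of the circle into the four arcs determined by `w, x, y, z`. -/
theorem cyc4_split {w x y z p : Fin n} (h : Cyc4 w x y z)
    (h1 : p ≠ w) (h2 : p ≠ x) (h3 : p ≠ y) (h4 : p ≠ z) :
    Cyc4 w p x y ∨ Cyc4 x p y z ∨ Cyc4 y p z w ∨ Cyc4 z p w x := by
  rcases h with ⟨ha1, ha2, ha3⟩ | ⟨ha1, ha2, ha3⟩ | ⟨ha1, ha2, ha3⟩ | ⟨ha1, ha2, ha3⟩
  · exact cyc4_split_chain ha1 ha2 ha3 h1 h2 h3 h4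
  · have := cyc4_split_chain ha1 ha2 ha3 h2 h3 h4 h1
    tauto
  · have := cyc4_split_chain ha1 ha2 ha3 h3 h4 h1 h2
    tauto
  · have := cyc4_split_chain ha1 ha2 ha3 h4 h1 h2 h3
    tauto

theorem wsep_diff_singleton {I J : Finset (Fin n)} (w : Fin n) (h : I \ J ⊆ {w}) :
    WSep I J := by
  rintro ⟨p, q, r, s, hcyc, h1, h2, _, _⟩
  have hp := h h1
  have hr := h h2
  simp only [Finset.mem_singleton] at hp hr
  subst hp; subst hr
  simp only [Cyc4, ne_eq, Fin.ext_iff, Fin.lt_def] at hcyc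
  omega

theorem wsep_pair_adjacent {a b c d : Fin n} (hcyc : Cyc4 a b c d) (H : Finset (Fin n)) :
    WSep (insert a (insert b H)) (insert c (insert d H)) := by
  rintro ⟨p, q, r, s, hpqrs, h1, h2, h3, h4⟩
  simp only [Finset.mem_sdiff, Finset.mem_insert, not_or] at h1 h2 h3 h4
  obtain ⟨(rfl | rfl | hm), _, _, hH⟩ := h1
  · obtain ⟨(rfl | rfl | hm), _, _, hH'⟩ := h2
    · simp only [Cyc4, ne_eq, Fin.ext_iff, Fin.lt_def] at hpqrs; omega
    · obtain ⟨(rfl | rfl | hq), _, _, hqH⟩ := h3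
      · obtain ⟨(rfl | rfl | hs), _, _, hsH⟩ := h4
        · simp only [Cyc4, ne_eq, Fin.ext_iff, Fin.lt_def] at hcyc hpqrs; omega
        · simp only [Cyc4, ne_eq, Fin.ext_iff, Fin.lt_def] at hcyc hpqrs; omega
        · exact hsH hs
      · obtain ⟨(rfl | rfl | hs), _, _, hsH⟩ := h4
        · simp only [Cyc4, ne_eq, Fin.ext_iff, Fin.lt_def] at hcyc hpqrs; omega
        · simp only [Cyc4, ne_eq, Fin.ext_iff, Fin.lt_def] at hcyc hpqrs; omega
        · exact hsH hs
      · exact hqH hq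
    · exact hH' hm
  · obtain ⟨(rfl | rfl | hm), _, _, hH'⟩ := h2
    · obtain ⟨(rfl | rfl | hq), _, _, hqH⟩ := h3
      · obtain ⟨(rfl | rfl | hs), _, _, hsH⟩ := h4
        · simp only [Cyc4, ne_eq, Fin.ext_iff, Fin.lt_def] at hcyc hpqrs; omega
        · simp only [Cyc4, ne_eq, Fin.ext_iff, Fin.lt_def] at hcyc hpqrs; omega
        · exact hsH hs
      · obtain ⟨(rfl | rfl | hs), _, _, hsH⟩ := h4
        · simp only [Cyc4, ne_eq, Fin.ext_iff, Fin.lt_def] at hcyc hpqrs; omega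
        · simp only [Cyc4, ne_eq, Fin.ext_iff, Fin.lt_def] at hcyc hpqrs; omega
        · exact hsH hs
      · exact hqH hq
    · simp only [Cyc4, ne_eq, Fin.ext_iff, Fin.lt_def] at hpqrs; omega
    · exact hH' hm
  · exact hH hm

theorem mem_sdiff_ins {x u v : Fin n} {X H : Finset (Fin n)} (hx : x ∈ X)
    (h1 : x ≠ u) (h2 : x ≠ v) (h3 : x ∉ H) : x ∈ X \ insert u (insert v H) :=
  Finset.mem_sdiff.mpr ⟨hx, by simp [h1, h2, h3]⟩

theorem mem_ins_sdiff_left {u v : Fin n} {X H : Finset (Fin n)} (h : u ∉ X) :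
    u ∈ insert u (insert v H) \ X :=
  Finset.mem_sdiff.mpr ⟨Finset.mem_insert_self _ _, h⟩

theorem mem_ins_sdiff_right {u v : Fin n} {X H : Finset (Fin n)} (h : v ∉ X) :
    v ∈ insert u (insert v H) \ X :=
  Finset.mem_sdiff.mpr ⟨by simp, h⟩

theorem mem_ins_sdiff_H {u v x : Fin n} {X H : Finset (Fin n)} (hx : x ∈ H) (h : x ∉ X) :
    x ∈ insert u (insert v H) \ X :=
  Finset.mem_sdiff.mpr ⟨by simp [hx], h⟩

end Helpers

section Key

variable {n : ℕ}

/-- The core cardinality argument: if `c, d ∈ X`, `a, b ∉ X`, and some `q ∈ H`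
with `q` in the arc from `c` to `d` is missing from `X`, then
`X ⊆ (H ∪ {c,d}) \ {q}`, which is too small. -/
theorem card_core (X H : Finset (Fin n)) (a b c d : Fin n)
    (hcyc : Cyc4 a b c d) (ha : a ∉ H) (hb : b ∉ H) (hc : c ∉ H) (hd : d ∉ H)
    (hcard : X.card = H.card + 2)
    (hS : WSep X (insert a (insert c H)))
    (hT : WSep X (insert b (insert d H)))
    (q : Fin n) (hqH : q ∈ H) (hqX : q ∉ X)
    (hqarc : Cyc4 c q d a)
    (hcX : c ∈ X) (hdX : d ∈ X) (haX : a ∉ X) (hbX : b ∉ X) : False := by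
  obtain ⟨hab, hac, had, hbc, hbd, hcd⟩ := cyc4_ne hcyc
  have hsub : X ⊆ (insert c (insert d H)).erase q := by
    intro z hzX
    rw [Finset.mem_erase, Finset.mem_insert, Finset.mem_insert]
    by_contra hcon
    push_neg at hcon
    have hzq : z ≠ q := fun e => hqX (e ▸ hzX)
    obtain ⟨hzc, hzd, hzH⟩ := hcon hzq
    have hza : z ≠ a := fun e => haX (e ▸ hzX)
    have hzb : z ≠ b := fun e => hbX (e ▸ hzX)
    rcases cyc4_split hqarc hzc hzq hzd hza with harc | harc | harc | harc
    · refine hS ⟨z, q, d, a, ?_,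
        mem_sdiff_ins hzX hza hzc hzH, mem_sdiff_ins hdX had.symm hcd.symm hd,
        mem_ins_sdiff_H hqH hqX, mem_ins_sdiff_left haX⟩
      simp only [Cyc4, ne_eq, Fin.ext_iff, Fin.lt_def] at hqarc harc ⊢; omega
    · refine hT ⟨c, q, z, b, ?_,
        mem_sdiff_ins hcX hbc.symm hcd hc, mem_sdiff_ins hzX hzb hzd hzH,
        mem_ins_sdiff_H hqH hqX, mem_ins_sdiff_left hbX⟩
      simp only [Cyc4, ne_eq, Fin.ext_iff, Fin.lt_def] at hcyc hqarc harc ⊢; omega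
    · refine hT ⟨c, q, z, b, ?_,
        mem_sdiff_ins hcX hbc.symm hcd hc, mem_sdiff_ins hzX hzb hzd hzH,
        mem_ins_sdiff_H hqH hqX, mem_ins_sdiff_left hbX⟩
      simp only [Cyc4, ne_eq, Fin.ext_iff, Fin.lt_def] at hcyc hqarc harc ⊢; omega
    · refine hS ⟨d, a, z, q, ?_,
        mem_sdiff_ins hdX had.symm hcd.symm hd, mem_sdiff_ins hzX hza hzc hzH,
        mem_ins_sdiff_left haX, mem_ins_sdiff_H hqH hqX⟩
      simp only [Cyc4, ne_eq, Fin.ext_iff, Fin.lt_def] at hqarc harc ⊢; omega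
  have h2 := Finset.card_le_card hsub
  rw [Finset.card_erase_of_mem (by simp [hqH]),
    Finset.card_insert_of_notMem (by simp [hcd, hc]),
    Finset.card_insert_of_notMem hd] at h2
  omega

/-- Case where the violating pattern is `c, q, d, s` with `q, s ∈ H`. -/
theorem helperA3 (X H : Finset (Fin n)) (a b c d : Fin n)
    (hcyc : Cyc4 a b c d) (ha : a ∉ H) (hb : b ∉ H) (hc : c ∉ H) (hd : d ∉ H)
    (hcard : X.card = H.card + 2)
    (hS : WSep X (insert a (insert c H)))
    (hT : WSep X (insert b (insert d H)))
    (q s : Fin n) (hqH : q ∈ H) (hqX : q ∉ X) (hsH : s ∈ H) (hsX : s ∉ X)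
    (hcds : Cyc4 c q d s) (hcX : c ∈ X) (hdX : d ∈ X) : False := by
  obtain ⟨hab, hac, had, hbc, hbd, hcd⟩ := cyc4_ne hcyc
  have hqa : q ≠ a := fun e => ha (e ▸ hqH)
  have hqb : q ≠ b := fun e => hb (e ▸ hqH)
  have hsa : s ≠ a := fun e => ha (e ▸ hsH)
  have hsb : s ≠ b := fun e => hb (e ▸ hsH)
  have hbX : b ∉ X := by
    intro hbX
    rcases cyc4_split hcds hbc hqb.symm hbd hsb.symm with harc | harc | harc | harc
    · simp only [Cyc4, ne_eq, Fin.ext_iff, Fin.lt_def] at hcyc harc; omega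
    · simp only [Cyc4, ne_eq, Fin.ext_iff, Fin.lt_def] at hcyc hcds harc; omega
    · by_cases haX : a ∈ X
      · refine hT ⟨c, q, a, s, ?_,
          mem_sdiff_ins hcX hbc.symm hcd hc, mem_sdiff_ins haX hab had ha,
          mem_ins_sdiff_H hqH hqX, mem_ins_sdiff_H hsH hsX⟩
        simp only [Cyc4, ne_eq, Fin.ext_iff, Fin.lt_def] at hcyc hcds harc ⊢; omega
      · refine hS ⟨d, a, b, s, ?_,
          mem_sdiff_ins hdX had.symm hcd.symm hd, mem_sdiff_ins hbX hab.symm hbc hb,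
          mem_ins_sdiff_left haX, mem_ins_sdiff_H hsH hsX⟩
        simp only [Cyc4, ne_eq, Fin.ext_iff, Fin.lt_def] at hcyc harc ⊢; omega
    · refine hS ⟨d, s, b, q, ?_,
        mem_sdiff_ins hdX had.symm hcd.symm hd, mem_sdiff_ins hbX hab.symm hbc hb,
        mem_ins_sdiff_H hsH hsX, mem_ins_sdiff_H hqH hqX⟩
      simp only [Cyc4, ne_eq, Fin.ext_iff, Fin.lt_def] at hcds harc ⊢; omega
  have haX : a ∉ X := by
    intro haX
    rcases cyc4_split hcds hac hqa.symm had hsa.symm with harc | harc | harc | harc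
    · simp only [Cyc4, ne_eq, Fin.ext_iff, Fin.lt_def] at hcyc harc; omega
    · simp only [Cyc4, ne_eq, Fin.ext_iff, Fin.lt_def] at hcyc hcds harc; omega
    · refine hT ⟨c, q, a, s, ?_,
        mem_sdiff_ins hcX hbc.symm hcd hc, mem_sdiff_ins haX hab had ha,
        mem_ins_sdiff_H hqH hqX, mem_ins_sdiff_H hsH hsX⟩
      simp only [Cyc4, ne_eq, Fin.ext_iff, Fin.lt_def] at hcds harc ⊢; omega
    · refine hT ⟨c, q, a, b, ?_,
        mem_sdiff_ins hcX hbc.symm hcd hc, mem_sdiff_ins haX hab had ha,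
        mem_ins_sdiff_H hqH hqX, mem_ins_sdiff_left hbX⟩
      simp only [Cyc4, ne_eq, Fin.ext_iff, Fin.lt_def] at hcyc hcds harc ⊢; omega
  refine card_core X H a b c d hcyc ha hb hc hd hcard hS hT q hqH hqX ?_ hcX hdX haX hbX
  simp only [Cyc4, ne_eq, Fin.ext_iff, Fin.lt_def] at hcyc hcds ⊢; omega

/-- Case `q ∈ H`, `s ∈ H`. -/
theorem helperA (X H : Finset (Fin n)) (a b c d : Fin n)
    (hcyc : Cyc4 a b c d) (ha : a ∉ H) (hb : b ∉ H) (hc : c ∉ H) (hd : d ∉ H)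
    (hcard : X.card = H.card + 2)
    (hS : WSep X (insert a (insert c H)))
    (hT : WSep X (insert b (insert d H)))
    (p r q s : Fin n) (hpqrs : Cyc4 p q r s)
    (hqH : q ∈ H) (hqX : q ∉ X) (hsH : s ∈ H) (hsX : s ∉ X)
    (hpX : p ∈ X) (hpa : p ≠ a) (hpb : p ≠ b) (hpH : p ∉ H)
    (hrX : r ∈ X) (hra : r ≠ a) (hrb : r ≠ b) (hrH : r ∉ H) : False := by
  obtain ⟨hab, hac, had, hbc, hbd, hcd⟩ := cyc4_ne hcyc
  by_cases hpc : p = c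
  · obtain rfl := hpc.symm
    by_cases hrd : r = d
    · obtain rfl := hrd.symm
      exact helperA3 X H a b c d hcyc ha hb hc hd hcard hS hT q s hqH hqX hsH hsX
        hpqrs hpX hrX
    · exact hT ⟨c, q, r, s, hpqrs,
        mem_sdiff_ins hpX hbc.symm hcd hc, mem_sdiff_ins hrX hrb hrd hrH,
        mem_ins_sdiff_H hqH hqX, mem_ins_sdiff_H hsH hsX⟩
  · by_cases hrc : r = c
    · obtain rfl := hrc.symm
      by_cases hpd : p = d
      · obtain rfl := hpd.symm
        have hrot : Cyc4 c s d q := by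
          simp only [Cyc4, ne_eq, Fin.ext_iff, Fin.lt_def] at hpqrs ⊢; omega
        exact helperA3 X H a b c d hcyc ha hb hc hd hcard hS hT s q hsH hsX hqH hqX
          hrot hrX hpX
      · exact hT ⟨p, q, c, s, hpqrs,
          mem_sdiff_ins hpX hpb hpd hpH, mem_sdiff_ins hrX hbc.symm hcd hc,
          mem_ins_sdiff_H hqH hqX, mem_ins_sdiff_H hsH hsX⟩
    · exact hS ⟨p, q, r, s, hpqrs,
        mem_sdiff_ins hpX hpa hpc hpH, mem_sdiff_ins hrX hra hrc hrH,
        mem_ins_sdiff_H hqH hqX, mem_ins_sdiff_H hsH hsX⟩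

/-- Case `q ∈ H`, `s = a`. -/
theorem helperBa (X H : Finset (Fin n)) (a b c d : Fin n)
    (hcyc : Cyc4 a b c d) (ha : a ∉ H) (hb : b ∉ H) (hc : c ∉ H) (hd : d ∉ H)
    (hcard : X.card = H.card + 2)
    (hS : WSep X (insert a (insert c H)))
    (hT : WSep X (insert b (insert d H)))
    (p r q : Fin n) (hpq : Cyc4 p q r a)
    (hqH : q ∈ H) (hqX : q ∉ X) (haX : a ∉ X)
    (hpX : p ∈ X) (hpa : p ≠ a) (hpb : p ≠ b) (hpH : p ∉ H)
    (hrX : r ∈ X) (hra : r ≠ a) (hrb : r ≠ b) (hrH : r ∉ H) : False := by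
  obtain ⟨hab, hac, had, hbc, hbd, hcd⟩ := cyc4_ne hcyc
  by_cases hpc : p = c
  · obtain rfl := hpc.symm
    by_cases hrd : r = d
    · obtain rfl := hrd.symm
      have hbX : b ∉ X := by
        intro hbX
        refine hS ⟨d, a, b, q, ?_,
          mem_sdiff_ins hrX had.symm hcd.symm hd, mem_sdiff_ins hbX hab.symm hbc hb,
          mem_ins_sdiff_left haX, mem_ins_sdiff_H hqH hqX⟩
        simp only [Cyc4, ne_eq, Fin.ext_iff, Fin.lt_def] at hcyc hpq ⊢; omega
      exact card_core X H a b c d hcyc ha hb hc hd hcard hS hT q hqH hqX hpq hpX hrX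
        haX hbX
    · have hrc : r ≠ c := by
        simp only [Cyc4, ne_eq, Fin.ext_iff, Fin.lt_def] at hpq ⊢; omega
      by_cases hbX : b ∈ X
      · refine hS ⟨r, a, b, q, ?_,
          mem_sdiff_ins hrX hra hrc hrH, mem_sdiff_ins hbX hab.symm hbc hb,
          mem_ins_sdiff_left haX, mem_ins_sdiff_H hqH hqX⟩
        simp only [Cyc4, ne_eq, Fin.ext_iff, Fin.lt_def] at hcyc hpq ⊢; omega
      · refine hT ⟨c, q, r, b, ?_,
          mem_sdiff_ins hpX hbc.symm hcd hc, mem_sdiff_ins hrX hrb hrd hrH,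
          mem_ins_sdiff_H hqH hqX, mem_ins_sdiff_left hbX⟩
        simp only [Cyc4, ne_eq, Fin.ext_iff, Fin.lt_def] at hcyc hpq ⊢; omega
  · by_cases hpd : p = d
    · obtain rfl := hpd.symm
      by_cases hrc : r = c
      · obtain rfl := hrc.symm
        simp only [Cyc4, ne_eq, Fin.ext_iff, Fin.lt_def] at hcyc hpq; omega
      · exact hS ⟨d, q, r, a, hpq,
          mem_sdiff_ins hpX had.symm hcd.symm hd, mem_sdiff_ins hrX hra hrc hrH,
          mem_ins_sdiff_H hqH hqX, mem_ins_sdiff_left haX⟩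
    · by_cases hrc : r = c
      · obtain rfl := hrc.symm
        by_cases hdX : d ∈ X
        · refine hS ⟨p, q, d, a, ?_,
            mem_sdiff_ins hpX hpa hpc hpH, mem_sdiff_ins hdX had.symm hcd.symm hd,
            mem_ins_sdiff_H hqH hqX, mem_ins_sdiff_left haX⟩
          simp only [Cyc4, ne_eq, Fin.ext_iff, Fin.lt_def] at hcyc hpq ⊢; omega
        · refine hT ⟨p, q, c, d, ?_,
            mem_sdiff_ins hpX hpb hpd hpH, mem_sdiff_ins hrX hbc.symm hcd hc,
            mem_ins_sdiff_H hqH hqX, mem_ins_sdiff_right hdX⟩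
          simp only [Cyc4, ne_eq, Fin.ext_iff, Fin.lt_def] at hcyc hpq ⊢; omega
      · exact hS ⟨p, q, r, a, hpq,
          mem_sdiff_ins hpX hpa hpc hpH, mem_sdiff_ins hrX hra hrc hrH,
          mem_ins_sdiff_H hqH hqX, mem_ins_sdiff_left haX⟩

/-- Case `q ∈ H`, `s = b`. -/
theorem helperBb (X H : Finset (Fin n)) (a b c d : Fin n)
    (hcyc : Cyc4 a b c d) (ha : a ∉ H) (hb : b ∉ H) (hc : c ∉ H) (hd : d ∉ H)
    (hcard : X.card = H.card + 2)
    (hS : WSep X (insert a (insert c H)))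
    (hT : WSep X (insert b (insert d H)))
    (p r q : Fin n) (hpq : Cyc4 p q r b)
    (hqH : q ∈ H) (hqX : q ∉ X) (hbX : b ∉ X)
    (hpX : p ∈ X) (hpa : p ≠ a) (hpb : p ≠ b) (hpH : p ∉ H)
    (hrX : r ∈ X) (hra : r ≠ a) (hrb : r ≠ b) (hrH : r ∉ H) : False := by
  obtain ⟨hab, hac, had, hbc, hbd, hcd⟩ := cyc4_ne hcyc
  by_cases hpc : p = c
  · obtain rfl := hpc.symm
    by_cases hrd : r = d
    · obtain rfl := hrd.symm
      have haX : a ∉ X := by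
        intro haX
        refine hT ⟨c, q, a, b, ?_,
          mem_sdiff_ins hpX hbc.symm hcd hc, mem_sdiff_ins haX hab had ha,
          mem_ins_sdiff_H hqH hqX, mem_ins_sdiff_left hbX⟩
        simp only [Cyc4, ne_eq, Fin.ext_iff, Fin.lt_def] at hcyc hpq ⊢; omega
      refine card_core X H a b c d hcyc ha hb hc hd hcard hS hT q hqH hqX ?_
        hpX hrX haX hbX
      simp only [Cyc4, ne_eq, Fin.ext_iff, Fin.lt_def] at hcyc hpq ⊢; omega
    · exact hT ⟨c, q, r, b, hpq,
        mem_sdiff_ins hpX hbc.symm hcd hc, mem_sdiff_ins hrX hrb hrd hrH,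
        mem_ins_sdiff_H hqH hqX, mem_ins_sdiff_left hbX⟩
  · by_cases hrc : r = c
    · obtain rfl := hrc.symm
      by_cases hpd : p = d
      · obtain rfl := hpd.symm
        simp only [Cyc4, ne_eq, Fin.ext_iff, Fin.lt_def] at hcyc hpq; omega
      · exact hT ⟨p, q, c, b, hpq,
          mem_sdiff_ins hpX hpb hpd hpH, mem_sdiff_ins hrX hbc.symm hcd hc,
          mem_ins_sdiff_H hqH hqX, mem_ins_sdiff_left hbX⟩
    · by_cases hrd : r = d
      · obtain rfl := hrd.symm
        have hpd : p ≠ d := by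
          simp only [Cyc4, ne_eq, Fin.ext_iff, Fin.lt_def] at hpq ⊢; omega
        by_cases haX : a ∈ X
        · refine hT ⟨a, b, p, q, ?_,
            mem_sdiff_ins haX hab had ha, mem_sdiff_ins hpX hpb hpd hpH,
            mem_ins_sdiff_left hbX, mem_ins_sdiff_H hqH hqX⟩
          simp only [Cyc4, ne_eq, Fin.ext_iff, Fin.lt_def] at hcyc hpq ⊢; omega
        · refine hS ⟨p, q, d, a, ?_,
            mem_sdiff_ins hpX hpa hpc hpH, mem_sdiff_ins hrX had.symm hcd.symm hd,
            mem_ins_sdiff_H hqH hqX, mem_ins_sdiff_left haX⟩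
          simp only [Cyc4, ne_eq, Fin.ext_iff, Fin.lt_def] at hcyc hpq ⊢; omega
      · by_cases hpd : p = d
        · obtain rfl := hpd.symm
          by_cases hcX : c ∈ X
          · refine hT ⟨r, b, c, q, ?_,
              mem_sdiff_ins hrX hrb hrd hrH, mem_sdiff_ins hcX hbc.symm hcd hc,
              mem_ins_sdiff_left hbX, mem_ins_sdiff_H hqH hqX⟩
            simp only [Cyc4, ne_eq, Fin.ext_iff, Fin.lt_def] at hcyc hpq ⊢; omega
          · refine hS ⟨d, q, r, c, ?_,
              mem_sdiff_ins hpX had.symm hcd.symm hd, mem_sdiff_ins hrX hra hrc hrH,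
              mem_ins_sdiff_H hqH hqX, mem_ins_sdiff_right hcX⟩
            simp only [Cyc4, ne_eq, Fin.ext_iff, Fin.lt_def] at hcyc hpq ⊢; omega
        · exact hT ⟨p, q, r, b, hpq,
            mem_sdiff_ins hpX hpb hpd hpH, mem_sdiff_ins hrX hrb hrd hrH,
            mem_ins_sdiff_H hqH hqX, mem_ins_sdiff_left hbX⟩

/-- Case `q = a`, `s = b`. -/
theorem helperC (X H : Finset (Fin n)) (a b c d : Fin n)
    (hcyc : Cyc4 a b c d) (ha : a ∉ H) (hb : b ∉ H) (hc : c ∉ H) (hd : d ∉ H)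
    (hcard : X.card = H.card + 2)
    (hS : WSep X (insert a (insert c H)))
    (hT : WSep X (insert b (insert d H)))
    (p r : Fin n) (hpq : Cyc4 p a r b) (haX : a ∉ X) (hbX : b ∉ X)
    (hpX : p ∈ X) (hpH : p ∉ H) (hrX : r ∈ X) (hrH : r ∉ H) : False := by
  obtain ⟨hab, hac, had, hbc, hbd, hcd⟩ := cyc4_ne hcyc
  have hpa : p ≠ a := fun e => haX (e ▸ hpX)
  have hpb : p ≠ b := fun e => hbX (e ▸ hpX)
  have hra : r ≠ a := fun e => haX (e ▸ hrX)
  have hrb : r ≠ b := fun e => hbX (e ▸ hrX)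
  have hrc : r ≠ c := by
    simp only [Cyc4, ne_eq, Fin.ext_iff, Fin.lt_def] at hcyc hpq ⊢; omega
  have hrd : r ≠ d := by
    simp only [Cyc4, ne_eq, Fin.ext_iff, Fin.lt_def] at hcyc hpq ⊢; omega
  by_cases hcX : c ∈ X
  · by_cases hdX : d ∈ X
    · have hnsub : ¬ H ⊆ X := by
        intro hsub
        have hsub2 : insert r (insert c (insert d H)) ⊆ X := by
          intro z hz
          simp only [Finset.mem_insert] at hz
          rcases hz with rfl | rfl | rfl | hz
          exacts [hrX, hcX, hdX, hsub hz]
        have hle := Finset.card_le_card hsub2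
        rw [Finset.card_insert_of_notMem (by simp [hrc, hrd, hrH]),
          Finset.card_insert_of_notMem (by simp [hcd, hc]),
          Finset.card_insert_of_notMem hd] at hle
        omega
      obtain ⟨h, hhH, hhX⟩ := Finset.not_subset.mp hnsub
      have hha : h ≠ a := fun e => ha (e ▸ hhH)
      have hhb : h ≠ b := fun e => hb (e ▸ hhH)
      have hhc : h ≠ c := fun e => hc (e ▸ hhH)
      have hhd : h ≠ d := fun e => hd (e ▸ hhH)
      have hhr : h ≠ r := fun e => hhX (e ▸ hrX)
      have hrcda : Cyc4 r c d a := by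
        simp only [Cyc4, ne_eq, Fin.ext_iff, Fin.lt_def] at hcyc hpq ⊢; omega
      rcases cyc4_split hrcda hhr hhc hhd hha with harc | harc | harc | harc
      · refine hS ⟨r, h, d, a, ?_,
          mem_sdiff_ins hrX hra hrc hrH, mem_sdiff_ins hdX had.symm hcd.symm hd,
          mem_ins_sdiff_H hhH hhX, mem_ins_sdiff_left haX⟩
        simp only [Cyc4, ne_eq, Fin.ext_iff, Fin.lt_def] at hrcda harc ⊢; omega
      · refine hS ⟨r, h, d, a, ?_,
          mem_sdiff_ins hrX hra hrc hrH, mem_sdiff_ins hdX had.symm hcd.symm hd,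
          mem_ins_sdiff_H hhH hhX, mem_ins_sdiff_left haX⟩
        simp only [Cyc4, ne_eq, Fin.ext_iff, Fin.lt_def] at hrcda harc ⊢; omega
      · refine hT ⟨c, h, r, b, ?_,
          mem_sdiff_ins hcX hbc.symm hcd hc, mem_sdiff_ins hrX hrb hrd hrH,
          mem_ins_sdiff_H hhH hhX, mem_ins_sdiff_left hbX⟩
        simp only [Cyc4, ne_eq, Fin.ext_iff, Fin.lt_def] at hcyc hpq harc ⊢; omega
      · refine hT ⟨c, h, r, b, ?_,
          mem_sdiff_ins hcX hbc.symm hcd hc, mem_sdiff_ins hrX hrb hrd hrH,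
          mem_ins_sdiff_H hhH hhX, mem_ins_sdiff_left hbX⟩
        simp only [Cyc4, ne_eq, Fin.ext_iff, Fin.lt_def] at hcyc hpq harc ⊢; omega
    · refine hT ⟨r, b, c, d, ?_,
        mem_sdiff_ins hrX hrb hrd hrH, mem_sdiff_ins hcX hbc.symm hcd hc,
        mem_ins_sdiff_left hbX, mem_ins_sdiff_right hdX⟩
      simp only [Cyc4, ne_eq, Fin.ext_iff, Fin.lt_def] at hcyc hpq ⊢; omega
  · by_cases hdX : d ∈ X
    · refine hS ⟨r, c, d, a, ?_,
        mem_sdiff_ins hrX hra hrc hrH, mem_sdiff_ins hdX had.symm hcd.symm hd,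
        mem_ins_sdiff_right hcX, mem_ins_sdiff_left haX⟩
      simp only [Cyc4, ne_eq, Fin.ext_iff, Fin.lt_def] at hcyc hpq ⊢; omega
    · have hpc : p ≠ c := fun e => hcX (e ▸ hpX)
      have hpd : p ≠ d := fun e => hdX (e ▸ hpX)
      have hbcda : Cyc4 b c d a := cyc4_rot hcyc
      rcases cyc4_split hbcda hpb hpc hpd hpa with harc | harc | harc | harc
      · refine hT ⟨r, b, p, d, ?_,
          mem_sdiff_ins hrX hrb hrd hrH, mem_sdiff_ins hpX hpb hpd hpH,
          mem_ins_sdiff_left hbX, mem_ins_sdiff_right hdX⟩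
        simp only [Cyc4, ne_eq, Fin.ext_iff, Fin.lt_def] at hcyc hpq harc ⊢; omega
      · refine hT ⟨r, b, p, d, ?_,
          mem_sdiff_ins hrX hrb hrd hrH, mem_sdiff_ins hpX hpb hpd hpH,
          mem_ins_sdiff_left hbX, mem_ins_sdiff_right hdX⟩
        simp only [Cyc4, ne_eq, Fin.ext_iff, Fin.lt_def] at hcyc hpq harc ⊢; omega
      · refine hS ⟨r, c, p, a, ?_,
          mem_sdiff_ins hrX hra hrc hrH, mem_sdiff_ins hpX hpa hpc hpH,
          mem_ins_sdiff_right hcX, mem_ins_sdiff_left haX⟩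
        simp only [Cyc4, ne_eq, Fin.ext_iff, Fin.lt_def] at hcyc hpq harc ⊢; omega
      · simp only [Cyc4, ne_eq, Fin.ext_iff, Fin.lt_def] at hpq harc; omega

/-- The key lemma: if `X` is weakly separated from both diagonals, it is
weakly separated from the side `H ∪ {a,b}`. -/
theorem key (X H : Finset (Fin n)) (a b c d : Fin n)
    (hcyc : Cyc4 a b c d) (ha : a ∉ H) (hb : b ∉ H) (hc : c ∉ H) (hd : d ∉ H)
    (hcard : X.card = H.card + 2)
    (hS : WSep X (insert a (insert c H)))
    (hT : WSep X (insert b (insert d H))) :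
    WSep X (insert a (insert b H)) := by
  rintro ⟨p, q, r, s, hpqrs, hp, hr, hq, hs⟩
  simp only [Finset.mem_sdiff, Finset.mem_insert, not_or] at hp hr hq hs
  obtain ⟨hpX, hpa, hpb, hpH⟩ := hp
  obtain ⟨hrX, hra, hrb, hrH⟩ := hr
  obtain ⟨hqm, hqX⟩ := hq
  obtain ⟨hsm, hsX⟩ := hs
  rcases hqm with hq1 | hq1 | hqH
  · obtain rfl := hq1.symm
    rcases hsm with hs1 | hs1 | hsH
    · obtain rfl := hs1.symm
      simp only [Cyc4, ne_eq, Fin.ext_iff, Fin.lt_def] at hpqrs; omega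
    · obtain rfl := hs1.symm
      exact helperC X H a b c d hcyc ha hb hc hd hcard hS hT p r hpqrs hqX hsX
        hpX hpH hrX hrH
    · have hrot : Cyc4 r s p a := by
        simp only [Cyc4, ne_eq, Fin.ext_iff, Fin.lt_def] at hpqrs ⊢; omega
      exact helperBa X H a b c d hcyc ha hb hc hd hcard hS hT r p s hrot hsH hsX hqX
        hrX hra hrb hrH hpX hpa hpb hpH
  · obtain rfl := hq1.symm
    rcases hsm with hs1 | hs1 | hsH
    · obtain rfl := hs1.symm
      have hrot : Cyc4 r a p b := by
        simp only [Cyc4, ne_eq, Fin.ext_iff, Fin.lt_def] at hpqrs ⊢; omega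
      exact helperC X H a b c d hcyc ha hb hc hd hcard hS hT r p hrot hsX hqX
        hrX hrH hpX hpH
    · obtain rfl := hs1.symm
      simp only [Cyc4, ne_eq, Fin.ext_iff, Fin.lt_def] at hpqrs; omega
    · have hrot : Cyc4 r s p b := by
        simp only [Cyc4, ne_eq, Fin.ext_iff, Fin.lt_def] at hpqrs ⊢; omega
      exact helperBb X H a b c d hcyc ha hb hc hd hcard hS hT r p s hrot hsH hsX hqX
        hrX hra hrb hrH hpX hpa hpb hpH
  · rcases hsm with hs1 | hs1 | hsH
    · obtain rfl := hs1.symm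
      exact helperBa X H a b c d hcyc ha hb hc hd hcard hS hT p r q hpqrs hqH hqX hsX
        hpX hpa hpb hpH hrX hra hrb hrH
    · obtain rfl := hs1.symm
      exact helperBb X H a b c d hcyc ha hb hc hd hcard hS hT p r q hpqrs hqH hqX hsX
        hpX hpa hpb hpH hrX hra hrb hrH
    · exact helperA X H a b c d hcyc ha hb hc hd hcard hS hT p r q s hpqrs hqH hqX
        hsH hsX hpX hpa hpb hpH hrX hra hrb hrH

end Key

/-- If every element of `C` other than `H∪{a,c}` is weakly separated from
`H∪{b,d}`, then `C` together with the four "sides" is weakly separated. -/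
theorem wsep_extend_by_sides (n k : ℕ) (hk : 2 ≤ k) (hkn : k ≤ n)
    (H : Finset (Fin n)) (hH : H.card = k - 2) (a b c d : Fin n)
    (ha : a ∉ H) (hb : b ∉ H) (hc : c ∉ H) (hd : d ∉ H)
    (hcyc : Cyc4 a b c d)
    (C : Set (Finset (Fin n)))
    (hcard : ∀ X ∈ C, X.card = k)
    (hws : C.Pairwise WSep)
    (hac : insert a (insert c H) ∈ C)
    (hbd : ∀ X ∈ C, X ≠ insert a (insert c H) → WSep X (insert b (insert d H))) :
    (C ∪ {insert a (insert b H), insert b (insert c H),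
      insert c (insert d H), insert d (insert a H)} :
      Set (Finset (Fin n))).Pairwise WSep := by
  have r1 : Cyc4 b c d a := cyc4_rot hcyc
  have r2 : Cyc4 c d a b := cyc4_rot r1
  have r3 : Cyc4 d a b c := cyc4_rot r2
  have hCside : ∀ X ∈ C, WSep X (insert a (insert b H)) ∧ WSep X (insert b (insert c H)) ∧
      WSep X (insert c (insert d H)) ∧ WSep X (insert d (insert a H)) := by
    intro X hX
    by_cases hXS : X = insert a (insert c H)
    · subst hXS
      refine ⟨wsep_diff_singleton c ?_, wsep_diff_singleton a ?_,
        wsep_diff_singleton a ?_, wsep_diff_singleton c ?_⟩ <;>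
      · intro z hz
        simp only [Finset.mem_sdiff, Finset.mem_insert, not_or,
          Finset.mem_singleton] at hz ⊢
        tauto
    · have hSX := hws hX hac hXS
      have hTX := hbd X hX hXS
      have hXc : X.card = H.card + 2 := by rw [hcard X hX]; omega
      exact ⟨key X H a b c d hcyc ha hb hc hd hXc hSX hTX,
        key X H b c d a r1 hb hc hd ha hXc hTX (Finset.insert_comm a c H ▸ hSX),
        key X H c d a b r2 hc hd ha hb hXc (Finset.insert_comm a c H ▸ hSX)
          (Finset.insert_comm b d H ▸ hTX),
        key X H d a b c r3 hd ha hb hc hXc (Finset.insert_comm b d H ▸ hTX) hSX⟩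
  have s12 : WSep (insert a (insert b H)) (insert b (insert c H)) :=
    wsep_diff_singleton a (by
      intro z hz
      simp only [Finset.mem_sdiff, Finset.mem_insert, not_or, Finset.mem_singleton] at hz ⊢
      tauto)
  have s13 : WSep (insert a (insert b H)) (insert c (insert d H)) :=
    wsep_pair_adjacent hcyc H
  have s14 : WSep (insert a (insert b H)) (insert d (insert a H)) :=
    wsep_diff_singleton b (by
      intro z hz
      simp only [Finset.mem_sdiff, Finset.mem_insert, not_or, Finset.mem_singleton] at hz ⊢
      tauto)
  have s23 : WSep (insert b (insert c H)) (insert c (insert d H)) :=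
    wsep_diff_singleton b (by
      intro z hz
      simp only [Finset.mem_sdiff, Finset.mem_insert, not_or, Finset.mem_singleton] at hz ⊢
      tauto)
  have s24 : WSep (insert b (insert c H)) (insert d (insert a H)) :=
    wsep_pair_adjacent r1 H
  have s34 : WSep (insert c (insert d H)) (insert d (insert a H)) :=
    wsep_diff_singleton c (by
      intro z hz
      simp only [Finset.mem_sdiff, Finset.mem_insert, not_or, Finset.mem_singleton] at hz ⊢
      tauto)
  intro x hx y hy hxy
  simp only [Set.mem_union, Set.mem_insert_iff, Set.mem_singleton_iff] at hx hy
  rcases hx with hx | rfl | rfl | rfl | rfl <;> rcases hy with hy | rfl | rfl | rfl | rfl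
  · exact hws hx hy hxy
  · exact (hCside x hx).1
  · exact (hCside x hx).2.1
  · exact (hCside x hx).2.2.1
  · exact (hCside x hx).2.2.2
  · exact ((hCside y hy).1).symm
  · exact absurd rfl hxy
  · exact s12
  · exact s13
  · exact s14
  · exact ((hCside y hy).2.1).symm
  · exact s12.symm
  · exact absurd rfl hxy
  · exact s23
  · exact s24
  · exact ((hCside y hy).2.2.1).symm
  · exact s13.symm
  · exact s23.symm
  · exact absurd rfl hxy
  · exact s34
  · exact ((hCside y hy).2.2.2).symm
  · exact s14.symm
  · exact s24.symm
  · exact s34.symm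
  · exact absurd rfl hxy
end

section
/- Let H be a subset of [n] with |H| = k−2, and let a, b, c, d be cyclically ordered elements of [n]\H. Let J be any k-element subset of [n] with H∪{a,c} ∥ J and H∪{b,d} ∥ J, and suppose H∪{a,b} is not weakly separated from J. Then c ∈ J and d ∈ J, while a ∉ J and b ∉ J. -/
set_option maxHeartbeats 1600000

/- ### auxiliary machinery -/

/-- position of `x` on the circle, measured from basepoint `a` -/
def o {n : ℕ} (a x : Fin n) : ℕ := if a.val ≤ x.val then x.val - a.val else x.val + n - a.val

def cycO (X Y Z W : ℕ) : Prop :=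
  (X<Y∧Y<Z∧Z<W)∨(Y<Z∧Z<W∧W<X)∨(Z<W∧W<X∧X<Y)∨(W<X∧X<Y∧Y<Z)

lemma o_base {n : ℕ} (a : Fin n) : o a a = 0 := by simp [o]

lemma o_inj {n : ℕ} {a x y : Fin n} (h : o a x = o a y) : x = y := by
  have hx := x.isLt; have hy := y.isLt; have ha := a.isLt
  unfold o at h; split_ifs at h <;> (apply Fin.ext; omega)

lemma ne_of_one {n : ℕ} {a x y : Fin n} (h : o a x ≠ o a y) : x ≠ y :=
  fun e => h (by rw [e])

lemma o_ne {n : ℕ} {a x y : Fin n} (h : x ≠ y) : o a x ≠ o a y :=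
  fun e => h (o_inj e)

lemma cyc4_to {n : ℕ} (a : Fin n) {x y z w : Fin n} (h : Cyc4 x y z w) :
    cycO (o a x) (o a y) (o a z) (o a w) := by
  have hx := x.isLt; have hy := y.isLt; have hz := z.isLt; have hw := w.isLt
  have ha := a.isLt
  simp only [Cyc4, Fin.lt_def] at h
  unfold cycO o
  rcases h with ⟨h1,h2,h3⟩|⟨h1,h2,h3⟩|⟨h1,h2,h3⟩|⟨h1,h2,h3⟩ <;>
    split_ifs <;> omega

lemma cyc4_of {n : ℕ} {a x y z w : Fin n} (h : cycO (o a x) (o a y) (o a z) (o a w)) :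
    Cyc4 x y z w := by
  have hx := x.isLt; have hy := y.isLt; have hz := z.isLt; have hw := w.isLt
  have ha := a.isLt
  simp only [Cyc4, Fin.lt_def]
  unfold cycO o at h
  rcases h with ⟨h1,h2,h3⟩|⟨h1,h2,h3⟩|⟨h1,h2,h3⟩|⟨h1,h2,h3⟩ <;>
    split_ifs at h1 h2 h3 <;> omega

lemma cyc4_rot_s11 {n : ℕ} {x y z w : Fin n} (h : Cyc4 x y z w) : Cyc4 z w x y := by
  unfold Cyc4 at *; tauto

lemma mem_diff_ins {n : ℕ} {J S : Finset (Fin n)} {x u v : Fin n}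
    (hx : x ∈ J) (h1 : x ≠ u) (h2 : x ≠ v) (h3 : x ∉ S) :
    x ∈ J \ insert u (insert v S) :=
  Finset.mem_sdiff.mpr ⟨hx, by simp only [Finset.mem_insert, not_or]; exact ⟨h1, h2, h3⟩⟩

lemma ins_diff₁ {n : ℕ} {J S : Finset (Fin n)} {x v : Fin n} (h : x ∉ J) :
    x ∈ insert x (insert v S) \ J :=
  Finset.mem_sdiff.mpr ⟨Finset.mem_insert_self _ _, h⟩

lemma ins_diff₂ {n : ℕ} {J S : Finset (Fin n)} {x u : Fin n} (h : x ∉ J) :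
    x ∈ insert u (insert x S) \ J :=
  Finset.mem_sdiff.mpr ⟨Finset.mem_insert_of_mem (Finset.mem_insert_self _ _), h⟩

lemma ins_diff₃ {n : ℕ} {J S : Finset (Fin n)} {x u v : Fin n} (hx : x ∈ S) (h : x ∉ J) :
    x ∈ insert u (insert v S) \ J :=
  Finset.mem_sdiff.mpr ⟨Finset.mem_insert_of_mem (Finset.mem_insert_of_mem hx), h⟩

/- ### the main blocks -/

/-- Case: witness is `(a, q, b, s)`. -/
lemma blockA {n : ℕ} {H J : Finset (Fin n)} {a b c d q s : Fin n}
    (haH : a ∉ H) (hbH : b ∉ H) (hcH : c ∉ H) (hdH : d ∉ H)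
    (hcyc : Cyc4 a b c d)
    (h1 : WSep (insert a (insert c H)) J) (h2 : WSep (insert b (insert d H)) J)
    (haJ : a ∉ J) (hbJ : b ∉ J) (hqJ : q ∈ J) (hsJ : s ∈ J)
    (hqb : q ≠ b) (hqH : q ∉ H) (hsb : s ≠ b) (hsH : s ∉ H)
    (hw : Cyc4 a q b s) : c ∈ J ∧ d ∈ J ∧ a ∉ J ∧ b ∉ J := by
  have h0 : o a a = 0 := o_base a
  have hgo := cyc4_to a hcyc
  have hwo := cyc4_to a hw
  simp only [cycO] at hgo hwo
  have hg : 0 < o a b ∧ o a b < o a c ∧ o a c < o a d := by omega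
  have hwn : 0 < o a q ∧ o a q < o a b ∧ o a b < o a s := by omega
  clear hgo hwo
  have hqa : q ≠ a := ne_of_one (a := a) (by omega)
  have hsa : s ≠ a := ne_of_one (a := a) (by omega)
  have hda : d ≠ a := ne_of_one (a := a) (by omega)
  have hdc : d ≠ c := ne_of_one (a := a) (by omega)
  have hcb : c ≠ b := ne_of_one (a := a) (by omega)
  have hcd : c ≠ d := ne_of_one (a := a) (by omega)
  have hcJ : c ∈ J := by
    by_contra hcJ
    have hqc : q ≠ c := fun e => hcJ (e ▸ hqJ)
    have hsc : s ≠ c := fun e => hcJ (e ▸ hsJ)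
    have oqc := o_ne (a := a) hqc
    have osc := o_ne (a := a) hsc
    by_cases hdJ : d ∈ J
    · exact h1 ⟨a, q, c, d, cyc4_of (a := a) (by simp only [cycO]; omega),
        ins_diff₁ haJ, ins_diff₂ hcJ,
        mem_diff_ins hqJ hqa hqc hqH, mem_diff_ins hdJ hda hdc hdH⟩
    · have hsd : s ≠ d := fun e => hdJ (e ▸ hsJ)
      have osd := o_ne (a := a) hsd
      have key : cycO (o a b) (o a s) (o a d) (o a q) ∨
          cycO (o a a) (o a q) (o a c) (o a s) := by
        simp only [cycO]; omega
      rcases key with k | k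
      · exact h2 ⟨b, s, d, q, cyc4_of k, ins_diff₁ hbJ, ins_diff₂ hdJ,
          mem_diff_ins hsJ hsb hsd hsH,
          mem_diff_ins hqJ hqb (fun e => hdJ (e ▸ hqJ)) hqH⟩
      · exact h1 ⟨a, q, c, s, cyc4_of k, ins_diff₁ haJ, ins_diff₂ hcJ,
          mem_diff_ins hqJ hqa hqc hqH, mem_diff_ins hsJ hsa hsc hsH⟩
  have hdJ : d ∈ J := by
    by_contra hdJ
    have hsd : s ≠ d := fun e => hdJ (e ▸ hsJ)
    have hqd : q ≠ d := fun e => hdJ (e ▸ hqJ)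
    have osd := o_ne (a := a) hsd
    have key : cycO (o a b) (o a s) (o a d) (o a q) ∨
        cycO (o a b) (o a c) (o a d) (o a s) := by
      simp only [cycO]; omega
    rcases key with k | k
    · exact h2 ⟨b, s, d, q, cyc4_of k, ins_diff₁ hbJ, ins_diff₂ hdJ,
        mem_diff_ins hsJ hsb hsd hsH, mem_diff_ins hqJ hqb hqd hqH⟩
    · exact h2 ⟨b, c, d, s, cyc4_of k, ins_diff₁ hbJ, ins_diff₂ hdJ,
        mem_diff_ins hcJ hcb hcd hcH, mem_diff_ins hsJ hsb hsd hsH⟩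
  exact ⟨hcJ, hdJ, haJ, hbJ⟩

/-- Case: witness is `(P, c, R, d)` with `P, R ∈ H ∪ {a,b}`. -/
lemma blockB2 {n : ℕ} {H J : Finset (Fin n)} {a b c d P R : Fin n}
    (haH : a ∉ H) (hbH : b ∉ H) (hcH : c ∉ H) (hdH : d ∉ H)
    (hcyc : Cyc4 a b c d)
    (h1 : WSep (insert a (insert c H)) J) (h2 : WSep (insert b (insert d H)) J)
    (hPI : P = a ∨ P = b ∨ P ∈ H) (hRI : R = a ∨ R = b ∨ R ∈ H)
    (hPJ : P ∉ J) (hRJ : R ∉ J) (hcJ : c ∈ J) (hdJ : d ∈ J)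
    (hw : Cyc4 P c R d) : c ∈ J ∧ d ∈ J ∧ a ∉ J ∧ b ∉ J := by
  have h0 : o a a = 0 := o_base a
  have hgo := cyc4_to a hcyc
  have hwo := cyc4_to a hw
  simp only [cycO] at hgo hwo
  have hg : 0 < o a b ∧ o a b < o a c ∧ o a c < o a d := by omega
  have hRH : R ∈ H := by
    rcases hRI with hRa' | hRb' | h
    · exfalso; rw [hRa'] at hwo; omega
    · exfalso; rw [hRb'] at hwo; omega
    · exact h
  have hwn : o a c < o a R ∧ o a R < o a d ∧ (o a P < o a c ∨ o a d < o a P) := by omega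
  clear hgo hwo
  have hba : b ≠ a := ne_of_one (a := a) (by omega)
  have hbc : b ≠ c := ne_of_one (a := a) (by omega)
  have hab : a ≠ b := ne_of_one (a := a) (by omega)
  have had : a ≠ d := ne_of_one (a := a) (by omega)
  have hda : d ≠ a := ne_of_one (a := a) (by omega)
  have hdc : d ≠ c := ne_of_one (a := a) (by omega)
  have hcb : c ≠ b := ne_of_one (a := a) (by omega)
  have hcd : c ≠ d := ne_of_one (a := a) (by omega)
  have hbJ : b ∉ J := by
    by_contra hbJ
    rcases hPI with hPa' | hPb' | hPH
    · rw [hPa'] at hPJ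
      exact h1 ⟨a, b, R, d, cyc4_of (a := a) (by simp only [cycO]; omega),
        ins_diff₁ hPJ, ins_diff₃ hRH hRJ,
        mem_diff_ins hbJ hba hbc hbH, mem_diff_ins hdJ hda hdc hdH⟩
    · rw [hPb'] at hPJ; exact hPJ hbJ
    · have hPa : P ≠ a := fun e => haH (e ▸ hPH)
      have hPb : P ≠ b := fun e => hbH (e ▸ hPH)
      have hPc : P ≠ c := fun e => hcH (e ▸ hPH)
      have hPd : P ≠ d := fun e => hdH (e ▸ hPH)
      have oPa := o_ne (a := a) hPa
      have oPb := o_ne (a := a) hPb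
      have oPc := o_ne (a := a) hPc
      have oPd := o_ne (a := a) hPd
      by_cases hx : cycO (o a P) (o a b) (o a R) (o a d)
      · exact h1 ⟨P, b, R, d, cyc4_of hx, ins_diff₃ hPH hPJ, ins_diff₃ hRH hRJ,
          mem_diff_ins hbJ hba hbc hbH, mem_diff_ins hdJ hda hdc hdH⟩
      · simp only [cycO] at hx
        by_cases haJ : a ∈ J
        · exact h2 ⟨P, c, R, a, cyc4_of (a := a) (by simp only [cycO]; omega),
            ins_diff₃ hPH hPJ, ins_diff₃ hRH hRJ,
            mem_diff_ins hcJ hcb hcd hcH, mem_diff_ins haJ hab had haH⟩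
        · exact h1 ⟨a, b, R, d, cyc4_of (a := a) (by simp only [cycO]; omega),
            ins_diff₁ haJ, ins_diff₃ hRH hRJ,
            mem_diff_ins hbJ hba hbc hbH, mem_diff_ins hdJ hda hdc hdH⟩
  have haJ : a ∉ J := by
    by_contra haJ
    exact h2 ⟨b, c, R, a, cyc4_of (a := a) (by simp only [cycO]; omega),
      ins_diff₁ hbJ, ins_diff₃ hRH hRJ,
      mem_diff_ins hcJ hcb hcd hcH, mem_diff_ins haJ hab had haH⟩
  exact ⟨hcJ, hdJ, haJ, hbJ⟩

/-- Case: witness is `(a, c, R, S)` with `R ∈ H`, `S ∉ {a,b,c,d}`: impossible. -/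
lemma block3 {n : ℕ} {H J : Finset (Fin n)} {a b c d R S : Fin n}
    (haH : a ∉ H) (hbH : b ∉ H) (hcH : c ∉ H) (hdH : d ∉ H)
    (hcyc : Cyc4 a b c d)
    (h1 : WSep (insert a (insert c H)) J) (h2 : WSep (insert b (insert d H)) J)
    (hRH : R ∈ H) (hRJ : R ∉ J) (haJ : a ∉ J) (hcJ : c ∈ J)
    (hSJ : S ∈ J) (hSb : S ≠ b) (hSd : S ≠ d) (hSH : S ∉ H)
    (hw : Cyc4 a c R S) : False := by
  have h0 : o a a = 0 := o_base a
  have hgo := cyc4_to a hcyc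
  have hwo := cyc4_to a hw
  simp only [cycO] at hgo hwo
  have hg : 0 < o a b ∧ o a b < o a c ∧ o a c < o a d := by omega
  have hwn : 0 < o a c ∧ o a c < o a R ∧ o a R < o a S := by omega
  clear hgo hwo
  have hba : b ≠ a := ne_of_one (a := a) (by omega)
  have hbc : b ≠ c := ne_of_one (a := a) (by omega)
  have hcb : c ≠ b := ne_of_one (a := a) (by omega)
  have hcd : c ≠ d := ne_of_one (a := a) (by omega)
  have hSa : S ≠ a := ne_of_one (a := a) (by omega)
  have hSc : S ≠ c := ne_of_one (a := a) (by omega)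
  by_cases hbJ : b ∈ J
  · exact h1 ⟨a, b, R, S, cyc4_of (a := a) (by simp only [cycO]; omega),
      ins_diff₁ haJ, ins_diff₃ hRH hRJ,
      mem_diff_ins hbJ hba hbc hbH, mem_diff_ins hSJ hSa hSc hSH⟩
  · exact h2 ⟨b, c, R, S, cyc4_of (a := a) (by simp only [cycO]; omega),
      ins_diff₁ hbJ, ins_diff₃ hRH hRJ,
      mem_diff_ins hcJ hcb hcd hcH, mem_diff_ins hSJ hSb hSd hSH⟩

/-- Case: witness is `(P, c, a, S)` with `P ∈ H`, `S ∉ {a,b,c,d}`. -/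
lemma block4 {n : ℕ} {H J : Finset (Fin n)} {a b c d P S : Fin n}
    (haH : a ∉ H) (hbH : b ∉ H) (hcH : c ∉ H) (hdH : d ∉ H)
    (hcyc : Cyc4 a b c d)
    (h1 : WSep (insert a (insert c H)) J) (h2 : WSep (insert b (insert d H)) J)
    (hPH : P ∈ H) (hPJ : P ∉ J) (haJ : a ∉ J) (hcJ : c ∈ J)
    (hSJ : S ∈ J) (hSb : S ≠ b) (hSd : S ≠ d) (hSH : S ∉ H)
    (hw : Cyc4 P c a S) : c ∈ J ∧ d ∈ J ∧ a ∉ J ∧ b ∉ J := by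
  have h0 : o a a = 0 := o_base a
  have hgo := cyc4_to a hcyc
  have hwo := cyc4_to a hw
  simp only [cycO] at hgo hwo
  have hg : 0 < o a b ∧ o a b < o a c ∧ o a c < o a d := by omega
  have hwn : 0 < o a S ∧ o a S < o a P ∧ o a P < o a c := by omega
  clear hgo hwo
  have hba : b ≠ a := ne_of_one (a := a) (by omega)
  have hbc : b ≠ c := ne_of_one (a := a) (by omega)
  have hcb : c ≠ b := ne_of_one (a := a) (by omega)
  have hcd : c ≠ d := ne_of_one (a := a) (by omega)
  have hda : d ≠ a := ne_of_one (a := a) (by omega)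
  have hdc : d ≠ c := ne_of_one (a := a) (by omega)
  have hSa : S ≠ a := ne_of_one (a := a) (by omega)
  have hSc : S ≠ c := ne_of_one (a := a) (by omega)
  have hPb : P ≠ b := fun e => hbH (e ▸ hPH)
  have oPb := o_ne (a := a) hPb
  by_cases hdJ : d ∈ J
  · by_cases hbJ : b ∈ J
    · exfalso
      have key : cycO (o a a) (o a S) (o a P) (o a b) ∨
          cycO (o a a) (o a S) (o a P) (o a d) := by
        simp only [cycO]; omega
      rcases key with k | k
      · exact h1 ⟨a, S, P, b, cyc4_of k, ins_diff₁ haJ, ins_diff₃ hPH hPJ,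
          mem_diff_ins hSJ hSa hSc hSH, mem_diff_ins hbJ hba hbc hbH⟩
      · exact h1 ⟨a, S, P, d, cyc4_of k, ins_diff₁ haJ, ins_diff₃ hPH hPJ,
          mem_diff_ins hSJ hSa hSc hSH, mem_diff_ins hdJ hda hdc hdH⟩
    · exact ⟨hcJ, hdJ, haJ, hbJ⟩
  · exfalso
    exact h2 ⟨P, c, d, S, cyc4_of (a := a) (by simp only [cycO]; omega),
      ins_diff₃ hPH hPJ, ins_diff₂ hdJ,
      mem_diff_ins hcJ hcb hcd hcH, mem_diff_ins hSJ hSb hSd hSH⟩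

/-- Case: witness is `(b, d, R, S)` with `R ∈ H`, `S ∉ {a,b,c,d}`: impossible. -/
lemma block6 {n : ℕ} {H J : Finset (Fin n)} {a b c d R S : Fin n}
    (haH : a ∉ H) (hbH : b ∉ H) (hcH : c ∉ H) (hdH : d ∉ H)
    (hcyc : Cyc4 a b c d)
    (h1 : WSep (insert a (insert c H)) J) (h2 : WSep (insert b (insert d H)) J)
    (hRH : R ∈ H) (hRJ : R ∉ J) (hbJ : b ∉ J) (hdJ : d ∈ J)
    (hSJ : S ∈ J) (hSa : S ≠ a) (hSb : S ≠ b) (hSc : S ≠ c) (hSH : S ∉ H)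
    (hw : Cyc4 b d R S) : False := by
  have h0 : o a a = 0 := o_base a
  have hgo := cyc4_to a hcyc
  have hwo := cyc4_to a hw
  simp only [cycO] at hgo hwo
  have hg : 0 < o a b ∧ o a b < o a c ∧ o a c < o a d := by omega
  have hwn : (o a b < o a d ∧ o a d < o a R ∧ o a R < o a S) ∨
      (o a S < o a b ∧ o a d < o a R) ∨ (o a R < o a S ∧ o a S < o a b) := by omega
  clear hgo hwo
  have hRc : R ≠ c := fun e => hcH (e ▸ hRH)
  have hRa : R ≠ a := fun e => haH (e ▸ hRH)
  have oRc := o_ne (a := a) hRc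
  have oRa := o_ne (a := a) hRa
  have oSa := o_ne (a := a) hSa
  have oSc := o_ne (a := a) hSc
  have hcb : c ≠ b := ne_of_one (a := a) (by omega)
  have hcd : c ≠ d := ne_of_one (a := a) (by omega)
  have hda : d ≠ a := ne_of_one (a := a) (by omega)
  have hdc : d ≠ c := ne_of_one (a := a) (by omega)
  have hSd : S ≠ d := ne_of_one (a := a) (by omega)
  by_cases hcJ : c ∈ J
  · exact h2 ⟨b, c, R, S, cyc4_of (a := a) (by simp only [cycO]; omega),
      ins_diff₁ hbJ, ins_diff₃ hRH hRJ,
      mem_diff_ins hcJ hcb hcd hcH, mem_diff_ins hSJ hSb hSd hSH⟩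
  · exact h1 ⟨c, d, R, S, cyc4_of (a := a) (by simp only [cycO]; omega),
      ins_diff₂ hcJ, ins_diff₃ hRH hRJ,
      mem_diff_ins hdJ hda hdc hdH, mem_diff_ins hSJ hSa hSc hSH⟩

/-- Case: witness is `(P, d, b, S)` with `P ∈ H`, `S ∉ {a,b,c,d}`: impossible. -/
lemma block7 {n : ℕ} {H J : Finset (Fin n)} {a b c d P S : Fin n}
    (haH : a ∉ H) (hbH : b ∉ H) (hcH : c ∉ H) (hdH : d ∉ H)
    (hcyc : Cyc4 a b c d)
    (h1 : WSep (insert a (insert c H)) J) (h2 : WSep (insert b (insert d H)) J)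
    (hPH : P ∈ H) (hPJ : P ∉ J) (hbJ : b ∉ J) (hdJ : d ∈ J)
    (hSJ : S ∈ J) (hSa : S ≠ a) (hSb : S ≠ b) (hSc : S ≠ c) (hSH : S ∉ H)
    (hw : Cyc4 P d b S) : False := by
  have h0 : o a a = 0 := o_base a
  have hgo := cyc4_to a hcyc
  have hwo := cyc4_to a hw
  simp only [cycO] at hgo hwo
  have hg : 0 < o a b ∧ o a b < o a c ∧ o a c < o a d := by omega
  have hwn : o a b < o a S ∧ o a S < o a P ∧ o a P < o a d := by omega
  clear hgo hwo
  have hab : a ≠ b := ne_of_one (a := a) (by omega)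
  have had : a ≠ d := ne_of_one (a := a) (by omega)
  have hda : d ≠ a := ne_of_one (a := a) (by omega)
  have hdc : d ≠ c := ne_of_one (a := a) (by omega)
  have hSd : S ≠ d := ne_of_one (a := a) (by omega)
  by_cases haJ : a ∈ J
  · exact h2 ⟨P, a, b, S, cyc4_of (a := a) (by simp only [cycO]; omega),
      ins_diff₃ hPH hPJ, ins_diff₁ hbJ,
      mem_diff_ins haJ hab had haH, mem_diff_ins hSJ hSb hSd hSH⟩
  · exact h1 ⟨P, d, a, S, cyc4_of (a := a) (by simp only [cycO]; omega),
      ins_diff₃ hPH hPJ, ins_diff₁ haJ,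
      mem_diff_ins hdJ hda hdc hdH, mem_diff_ins hSJ hSa hSc hSH⟩

/- ### the theorem -/

/-- Key intermediate step of the cross lemma: if `H∪{a,b}` fails to be weakly
separated from `J` then `c, d ∈ J` while `a, b ∉ J`. -/
theorem cross_lemma_membership (n k : ℕ) (hk : 2 ≤ k) (hkn : k ≤ n)
    (H : Finset (Fin n)) (hH : H.card = k - 2) (a b c d : Fin n)
    (ha : a ∉ H) (hb : b ∉ H) (hc : c ∉ H) (hd : d ∉ H)
    (hcyc : Cyc4 a b c d)
    (J : Finset (Fin n)) (hJ : J.card = k)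
    (h1 : WSep (insert a (insert c H)) J)
    (h2 : WSep (insert b (insert d H)) J)
    (hnot : ¬ WSep (insert a (insert b H)) J) :
    c ∈ J ∧ d ∈ J ∧ a ∉ J ∧ b ∉ J := by
  classical
  simp only [WSep, not_not] at hnot
  obtain ⟨p, q, r, s, hw, hpm, hrm, hqm, hsm⟩ := hnot
  rw [Finset.mem_sdiff] at hpm hrm hqm hsm
  obtain ⟨hpI, hpJ⟩ := hpm
  obtain ⟨hrI, hrJ⟩ := hrm
  obtain ⟨hqJ, hqI⟩ := hqm
  obtain ⟨hsJ, hsI⟩ := hsm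
  simp only [Finset.mem_insert] at hpI hrI
  simp only [Finset.mem_insert, not_or] at hqI hsI
  obtain ⟨hqa, hqb, hqH⟩ := hqI
  obtain ⟨hsa, hsb, hsH⟩ := hsI
  have h0 : o a a = 0 := o_base a
  have hgo := cyc4_to a hcyc
  simp only [cycO] at hgo
  have hg : 0 < o a b ∧ o a b < o a c ∧ o a c < o a d := by omega
  clear hgo
  have hcb : c ≠ b := ne_of_one (a := a) (by omega)
  have hcd : c ≠ d := ne_of_one (a := a) (by omega)
  rcases hpI with hpa | hpb | hpH <;> rcases hrI with hra | hrb | hrH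
  · -- p = a, r = a
    exfalso
    rw [hpa, hra] at hw
    have hwo := cyc4_to a hw
    simp only [cycO] at hwo
    omega
  · -- p = a, r = b
    rw [hpa] at hw hpJ; rw [hrb] at hw hrJ
    exact blockA ha hb hc hd hcyc h1 h2 hpJ hrJ hqJ hsJ hqb hqH hsb hsH hw
  · -- p = a, r ∈ H
    rw [hpa] at hw hpJ
    by_cases hqc : q = c
    · rw [hqc] at hw hqJ
      by_cases hsd : s = d
      · rw [hsd] at hw hsJ
        exact blockB2 ha hb hc hd hcyc h1 h2 (Or.inl rfl) (Or.inr (Or.inr hrH))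
          hpJ hrJ hqJ hsJ hw
      · exact (block3 ha hb hc hd hcyc h1 h2 hrH hrJ hpJ hqJ hsJ hsb hsd hsH hw).elim
    · by_cases hsc : s = c
      · rw [hsc] at hw hsJ
        by_cases hqd : q = d
        · rw [hqd] at hw hqJ
          exact blockB2 ha hb hc hd hcyc h1 h2 (Or.inr (Or.inr hrH)) (Or.inl rfl)
            hrJ hpJ hsJ hqJ (cyc4_rot_s11 hw)
        · exact block4 ha hb hc hd hcyc h1 h2 hrH hrJ hpJ hsJ hqJ hqb hqd hqH
            (cyc4_rot_s11 hw)
      · exact absurd (h1 ⟨a, q, r, s, hw, ins_diff₁ hpJ, ins_diff₃ hrH hrJ,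
          mem_diff_ins hqJ hqa hqc hqH, mem_diff_ins hsJ hsa hsc hsH⟩) (fun f => f)
  · -- p = b, r = a
    rw [hpb] at hw hpJ; rw [hra] at hw hrJ
    exact blockA ha hb hc hd hcyc h1 h2 hrJ hpJ hsJ hqJ hsb hsH hqb hqH (cyc4_rot_s11 hw)
  · -- p = b, r = b
    exfalso
    rw [hpb, hrb] at hw
    have hwo := cyc4_to a hw
    simp only [cycO] at hwo
    omega
  · -- p = b, r ∈ H
    rw [hpb] at hw hpJ
    by_cases hqd : q = d
    · rw [hqd] at hw hqJ
      by_cases hsc : s = c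
      · rw [hsc] at hw hsJ
        exact blockB2 ha hb hc hd hcyc h1 h2 (Or.inr (Or.inr hrH)) (Or.inr (Or.inl rfl))
          hrJ hpJ hsJ hqJ (cyc4_rot_s11 hw)
      · exact (block6 ha hb hc hd hcyc h1 h2 hrH hrJ hpJ hqJ hsJ hsa hsb hsc hsH hw).elim
    · by_cases hsd : s = d
      · rw [hsd] at hw hsJ
        by_cases hqc : q = c
        · rw [hqc] at hw hqJ
          exact blockB2 ha hb hc hd hcyc h1 h2 (Or.inr (Or.inl rfl)) (Or.inr (Or.inr hrH))
            hpJ hrJ hqJ hsJ hw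
        · exact (block7 ha hb hc hd hcyc h1 h2 hrH hrJ hpJ hsJ hqJ hqa hqb hqc hqH
            (cyc4_rot_s11 hw)).elim
      · exact absurd (h2 ⟨b, q, r, s, hw, ins_diff₁ hpJ, ins_diff₃ hrH hrJ,
          mem_diff_ins hqJ hqb hqd hqH, mem_diff_ins hsJ hsb hsd hsH⟩) (fun f => f)
  · -- p ∈ H, r = a
    rw [hra] at hw hrJ
    by_cases hqc : q = c
    · rw [hqc] at hw hqJ
      by_cases hsd : s = d
      · rw [hsd] at hw hsJ
        exact blockB2 ha hb hc hd hcyc h1 h2 (Or.inr (Or.inr hpH)) (Or.inl rfl)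
          hpJ hrJ hqJ hsJ hw
      · exact block4 ha hb hc hd hcyc h1 h2 hpH hpJ hrJ hqJ hsJ hsb hsd hsH hw
    · by_cases hsc : s = c
      · rw [hsc] at hw hsJ
        by_cases hqd : q = d
        · rw [hqd] at hw hqJ
          exact blockB2 ha hb hc hd hcyc h1 h2 (Or.inl rfl) (Or.inr (Or.inr hpH))
            hrJ hpJ hsJ hqJ (cyc4_rot_s11 hw)
        · exact (block3 ha hb hc hd hcyc h1 h2 hpH hpJ hrJ hsJ hqJ hqb hqd hqH
            (cyc4_rot_s11 hw)).elim
      · exact absurd (h1 ⟨p, q, a, s, hw, ins_diff₃ hpH hpJ, ins_diff₁ hrJ,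
          mem_diff_ins hqJ hqa hqc hqH, mem_diff_ins hsJ hsa hsc hsH⟩) (fun f => f)
  · -- p ∈ H, r = b
    rw [hrb] at hw hrJ
    by_cases hqd : q = d
    · rw [hqd] at hw hqJ
      by_cases hsc : s = c
      · rw [hsc] at hw hsJ
        exact blockB2 ha hb hc hd hcyc h1 h2 (Or.inr (Or.inl rfl)) (Or.inr (Or.inr hpH))
          hrJ hpJ hsJ hqJ (cyc4_rot_s11 hw)
      · exact (block7 ha hb hc hd hcyc h1 h2 hpH hpJ hrJ hqJ hsJ hsa hsb hsc hsH hw).elim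
    · by_cases hsd : s = d
      · rw [hsd] at hw hsJ
        by_cases hqc : q = c
        · rw [hqc] at hw hqJ
          exact blockB2 ha hb hc hd hcyc h1 h2 (Or.inr (Or.inr hpH)) (Or.inr (Or.inl rfl))
            hpJ hrJ hqJ hsJ hw
        · exact (block6 ha hb hc hd hcyc h1 h2 hpH hpJ hrJ hsJ hqJ hqa hqb hqc hqH
            (cyc4_rot_s11 hw)).elim
      · exact absurd (h2 ⟨p, q, b, s, hw, ins_diff₃ hpH hpJ, ins_diff₁ hrJ,
          mem_diff_ins hqJ hqb hqd hqH, mem_diff_ins hsJ hsb hsd hsH⟩) (fun f => f)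
  · -- p ∈ H, r ∈ H
    by_cases hqc : q = c
    · rw [hqc] at hw hqJ
      by_cases hsd : s = d
      · rw [hsd] at hw hsJ
        exact blockB2 ha hb hc hd hcyc h1 h2 (Or.inr (Or.inr hpH)) (Or.inr (Or.inr hrH))
          hpJ hrJ hqJ hsJ hw
      · exact absurd (h2 ⟨p, c, r, s, hw, ins_diff₃ hpH hpJ, ins_diff₃ hrH hrJ,
          mem_diff_ins hqJ hcb hcd hc, mem_diff_ins hsJ hsb hsd hsH⟩) (fun f => f)
    · by_cases hsc : s = c
      · rw [hsc] at hw hsJ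
        by_cases hqd : q = d
        · rw [hqd] at hw hqJ
          exact blockB2 ha hb hc hd hcyc h1 h2 (Or.inr (Or.inr hrH)) (Or.inr (Or.inr hpH))
            hrJ hpJ hsJ hqJ (cyc4_rot_s11 hw)
        · exact absurd (h2 ⟨r, c, p, q, cyc4_rot_s11 hw, ins_diff₃ hrH hrJ, ins_diff₃ hpH hpJ,
            mem_diff_ins hsJ hcb hcd hc, mem_diff_ins hqJ hqb hqd hqH⟩) (fun f => f)
      · exact absurd (h1 ⟨p, q, r, s, hw, ins_diff₃ hpH hpJ, ins_diff₃ hrH hrJ,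
          mem_diff_ins hqJ hqa hqc hqH, mem_diff_ins hsJ hsa hsc hsH⟩) (fun f => f)
end
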